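/- Let p be a prime number. The canonical ring homomorphism ℤ_p → ℤ_p[X]/(pX) given by inclusion of constants induces an isomorphism of groups ℤ_p^× ≅ (ℤ_p[X]/(pX))^×; that is, every unit of the ring ℤ_p[X]/(pX) is the class of a constant polynomial with value in ℤ_p^×. Consequently, for every positive integer n not divisible by p, the quotient of the unit group (ℤ_p[X]/(pX))^× by its subgroup of n-th powers is isomorphic to 𝔽_p^×/(𝔽_p^×)^n, the multiplicative group of the field with p elements modulo n-th powers. -/

import Mathlib

open Polynomial

/-- The subgroup of `n`-th powers of a commutative group. -/
def nthPowers (G : Type*) [CommGroup G] (n : ℕ) : Subgroup G :=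
  (powMonoidHom n : G →* G).range

variable {p : ℕ} [Fact p.Prime]

/-- Key: if f*g ≡ 1 mod (pX), then f.coeff 0 is a unit and f ≡ C (f.coeff 0). -/
lemma aux_key (f g : ℤ_[p][X]) (h : (p : ℤ_[p][X]) * X ∣ f * g - 1) :
    IsUnit (f.coeff 0) ∧ (p : ℤ_[p][X]) * X ∣ f - C (f.coeff 0) := by
  obtain ⟨q, hq⟩ := h
  have hq' : f * g = 1 + (p : ℤ_[p][X]) * X * q := by linear_combination hq
  have h0 : f.coeff 0 * g.coeff 0 = 1 := by
    have := congrArg (fun r : ℤ_[p][X] => r.coeff 0) hq'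
    simpa [mul_assoc, mul_coeff_zero] using this
  have hmap : f.map (PadicInt.toZMod) * g.map (PadicInt.toZMod) = 1 := by
    have := congrArg (Polynomial.map (PadicInt.toZMod (p := p))) hq'
    simpa [Polynomial.map_mul, Polynomial.map_add, Polynomial.map_one,
      Polynomial.map_natCast, ZMod.natCast_self] using this
  have hu : IsUnit (f.map (PadicInt.toZMod (p := p))) := IsUnit.of_mul_eq_one _ hmap
  obtain ⟨r, -, hr⟩ := Polynomial.isUnit_iff.mp hu
  have hdvd : ∀ i : ℕ, (p : ℤ_[p]) ∣ f.coeff (i + 1) := by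
    intro i
    have : (f.map (PadicInt.toZMod (p := p))).coeff (i+1) = 0 := by
      rw [← hr]; simp [coeff_C]
    rw [coeff_map] at this
    have hk : f.coeff (i+1) ∈ RingHom.ker (PadicInt.toZMod (p := p)) := this
    rwa [PadicInt.ker_toZMod, PadicInt.maximalIdeal_eq_span_p,
      Ideal.mem_span_singleton] at hk
  refine ⟨IsUnit.of_mul_eq_one _ h0, ?_⟩
  have hX : X ∣ f - C (f.coeff 0) := by
    rw [X_dvd_iff]; simp
  obtain ⟨q', hq'2⟩ := hX
  have hC : C (p : ℤ_[p]) ∣ q' := by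
    rw [C_dvd_iff_dvd_coeff]
    intro i
    have := congrArg (fun r : ℤ_[p][X] => r.coeff (i + 1)) hq'2
    simp only [coeff_sub, coeff_C, coeff_X_mul] at this
    rw [← this]
    simpa using hdvd i
  obtain ⟨q'', hq''⟩ := hC
  exact ⟨q'', by rw [hq'2, hq'', Polynomial.C_eq_natCast]; ring⟩

lemma aux_bij :
    Function.Bijective
      (Units.map ((Ideal.Quotient.mk (Ideal.span {(p : ℤ_[p][X]) * X})).comp
        (C : ℤ_[p] →+* ℤ_[p][X])).toMonoidHom) := by
  set φ := ((Ideal.Quotient.mk (Ideal.span {(p : ℤ_[p][X]) * X})).comp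
        (C : ℤ_[p] →+* ℤ_[p][X])) with hφ
  have hinj : Function.Injective φ := by
    rw [injective_iff_map_eq_zero]
    intro a ha
    have : C a ∈ Ideal.span {(p : ℤ_[p][X]) * X} := by
      rwa [← Ideal.Quotient.eq_zero_iff_mem]
    rw [Ideal.mem_span_singleton] at this
    obtain ⟨q, hqa⟩ := this
    have := congrArg (fun r : ℤ_[p][X] => r.coeff 0) hqa
    simpa [mul_assoc, mul_coeff_zero] using this
  constructor
  · exact Units.map_injective hinj
  · intro u
    obtain ⟨f, hf⟩ := Ideal.Quotient.mk_surjective (u : ℤ_[p][X] ⧸ Ideal.span {(p : ℤ_[p][X]) * X})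
    obtain ⟨g, hg⟩ := Ideal.Quotient.mk_surjective ((u⁻¹ : _ˣ) : ℤ_[p][X] ⧸ Ideal.span {(p : ℤ_[p][X]) * X})
    have hfg : (p : ℤ_[p][X]) * X ∣ f * g - 1 := by
      rw [← Ideal.mem_span_singleton, ← Ideal.Quotient.eq_zero_iff_mem]
      have : (Ideal.Quotient.mk (Ideal.span {(p : ℤ_[p][X]) * X})) (f * g) = 1 := by
        rw [map_mul, hf, hg]; exact u.mul_inv
      rw [map_sub, this, map_one, sub_self]
    obtain ⟨ha, hfa⟩ := aux_key f g hfg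
    refine ⟨ha.unit, ?_⟩
    apply Units.ext
    have : φ (f.coeff 0) = (u : ℤ_[p][X] ⧸ Ideal.span {(p : ℤ_[p][X]) * X}) := by
      rw [hφ]
      show (Ideal.Quotient.mk _) (C (f.coeff 0)) = _
      rw [← hf, Ideal.Quotient.mk_eq_mk_iff_sub_mem]
      rw [Ideal.mem_span_singleton]
      exact (dvd_sub_comm).mp hfa
    simpa using this

lemma aux_map_nthPowers {G H : Type*} [CommGroup G] [CommGroup H] (e : G ≃* H) (n : ℕ) :
    (nthPowers G n).map (e : G →* H) = nthPowers H n := by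
  ext y
  simp only [nthPowers, Subgroup.mem_map, MonoidHom.mem_range, powMonoidHom_apply]
  constructor
  · rintro ⟨x, ⟨z, rfl⟩, rfl⟩
    exact ⟨e z, by simp⟩
  · rintro ⟨z, rfl⟩
    exact ⟨(e.symm z) ^ n, ⟨e.symm z, rfl⟩, by simp⟩

lemma aux_toZMod_units_surj :
    Function.Surjective (Units.map (PadicInt.toZMod (p := p)).toMonoidHom) := by
  intro v
  obtain ⟨k, hk⟩ := ZMod.natCast_rightInverse.surjective (v : ZMod p)
  have hx : PadicInt.toZMod ((k : ℤ_[p])) = (v : ZMod p) := by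
    rw [map_natCast]; exact hk
  have hxu : IsUnit ((k : ℤ_[p])) := by
    rw [← IsLocalRing.notMem_maximalIdeal, ← PadicInt.ker_toZMod]
    intro h
    rw [RingHom.mem_ker, hx] at h
    exact v.ne_zero h
  refine ⟨hxu.unit, Units.ext ?_⟩
  simpa using hx

lemma aux_hensel (n : ℕ) (hn : 0 < n) (hpn : ¬ p ∣ n) (c : ℤ_[p])
    (hc : (p : ℤ_[p]) ∣ c - 1) : ∃ z : ℤ_[p], z ^ n = c := by
  set F : ℤ_[p][X] := X ^ n - C c with hF
  have hd : F.derivative = (n : ℤ_[p][X]) * X ^ (n - 1) := by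
    simp [hF, derivative_X_pow]
  have heval1 : F.eval 1 = 1 - c := by simp [hF]
  have hdeval1 : F.derivative.eval 1 = (n : ℤ_[p]) := by
    rw [hd]; simp
  have hnorm_n : ‖(n : ℤ_[p])‖ = 1 := by
    rcases lt_or_eq_of_le (PadicInt.norm_le_one (n : ℤ_[p])) with h | h
    · exfalso
      rw [PadicInt.norm_lt_one_iff_dvd] at h
      apply hpn
      have : PadicInt.toZMod ((n : ℤ_[p])) = 0 := by
        obtain ⟨t, ht⟩ := h
        rw [ht, map_mul, map_natCast, ZMod.natCast_self, zero_mul]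
      rw [map_natCast] at this
      exact (ZMod.natCast_eq_zero_iff n p).mp this
    · exact h
  have hlt : ‖F.eval 1‖ < ‖F.derivative.eval 1‖ ^ 2 := by
    rw [heval1, hdeval1, hnorm_n, one_pow]
    calc ‖(1 : ℤ_[p]) - c‖ = ‖c - 1‖ := by rw [← norm_neg]; ring_nf
    _ < 1 := by rw [PadicInt.norm_lt_one_iff_dvd]; exact hc
  obtain ⟨z, hz, -⟩ := hensels_lemma hlt
  refine ⟨z, ?_⟩
  have : z ^ n - c = 0 := by simpa [hF] using hz
  exact sub_eq_zero.mp this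

lemma aux_equiv2 (n : ℕ) (hn : 0 < n) (hpn : ¬ p ∣ n) :
    Nonempty ((ℤ_[p]ˣ ⧸ nthPowers ℤ_[p]ˣ n) ≃* ((ZMod p)ˣ ⧸ nthPowers (ZMod p)ˣ n)) := by
  set ψ : ℤ_[p]ˣ →* ((ZMod p)ˣ ⧸ nthPowers (ZMod p)ˣ n) :=
    (QuotientGroup.mk' _).comp (Units.map (PadicInt.toZMod (p := p)).toMonoidHom) with hψ
  have hsurj : Function.Surjective ψ :=
    (QuotientGroup.mk'_surjective _).comp aux_toZMod_units_surj
  have hker : ψ.ker = nthPowers ℤ_[p]ˣ n := by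
    ext u
    simp only [hψ, MonoidHom.mem_ker, MonoidHom.comp_apply, QuotientGroup.mk'_apply]
    rw [QuotientGroup.eq_one_iff]
    constructor
    · rintro ⟨v, hv⟩
      simp only [powMonoidHom_apply] at hv
      obtain ⟨w, hw⟩ := aux_toZMod_units_surj (p := p) v
      set t : ℤ_[p]ˣ := u * (w ^ n)⁻¹ with ht
      have htm : Units.map (PadicInt.toZMod (p := p)).toMonoidHom t = 1 := by
        rw [ht, map_mul, map_inv, map_pow, hw, hv, mul_inv_cancel]
      have htm' : PadicInt.toZMod ((t : ℤ_[p])) = 1 := by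
        have := congrArg Units.val htm
        simpa using this
      have hdvd : (p : ℤ_[p]) ∣ (t : ℤ_[p]) - 1 := by
        have : (t : ℤ_[p]) - 1 ∈ RingHom.ker (PadicInt.toZMod (p := p)) := by
          rw [RingHom.mem_ker, map_sub, htm', map_one, sub_self]
        rwa [PadicInt.ker_toZMod, PadicInt.maximalIdeal_eq_span_p,
          Ideal.mem_span_singleton] at this
      obtain ⟨z, hz⟩ := aux_hensel n hn hpn _ hdvd
      have hzu : IsUnit z := by
        have : IsUnit (z ^ n) := by rw [hz]; exact t.isUnit
        exact (isUnit_pow_iff hn.ne').mp this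
      have h1 : hzu.unit ^ n = t := Units.ext (by simpa using hz)
      refine ⟨hzu.unit * w, ?_⟩
      simp only [powMonoidHom_apply, mul_pow, h1, ht]
      group
    · rintro ⟨w, rfl⟩
      exact ⟨Units.map (PadicInt.toZMod (p := p)).toMonoidHom w, by
        simp [powMonoidHom_apply, map_pow]⟩
  exact ⟨(QuotientGroup.quotientMulEquivOfEq hker.symm).trans
    (QuotientGroup.quotientKerEquivOfSurjective ψ hsurj)⟩

/-- The inclusion of constants `ℤ_p → ℤ_p[X]/(pX)` induces an isomorphism on unit
groups `ℤ_p^× ≅ (ℤ_p[X]/(pX))^×`; consequently, for every positive integer `n` not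
divisible by `p`, the group `(ℤ_p[X]/(pX))^×` modulo `n`-th powers is isomorphic to
`𝔽_p^×/(𝔽_p^×)^n`. -/
theorem stmt8 (p : ℕ) [Fact p.Prime] :
    Function.Bijective
      (Units.map ((Ideal.Quotient.mk (Ideal.span {(p : ℤ_[p][X]) * X})).comp
        (C : ℤ_[p] →+* ℤ_[p][X])).toMonoidHom) ∧
    ∀ n : ℕ, 0 < n → ¬ (p ∣ n) →
      Nonempty
        (((ℤ_[p][X] ⧸ Ideal.span {(p : ℤ_[p][X]) * X})ˣ ⧸
            nthPowers (ℤ_[p][X] ⧸ Ideal.span {(p : ℤ_[p][X]) * X})ˣ n) ≃*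
          ((ZMod p)ˣ ⧸ nthPowers (ZMod p)ˣ n)) := by
  refine ⟨aux_bij, ?_⟩
  intro n hn hpn
  have e1 : ℤ_[p]ˣ ≃* (ℤ_[p][X] ⧸ Ideal.span {(p : ℤ_[p][X]) * X})ˣ :=
    MulEquiv.ofBijective _ aux_bij
  have e2 := QuotientGroup.congr (nthPowers ℤ_[p]ˣ n)
    (nthPowers (ℤ_[p][X] ⧸ Ideal.span {(p : ℤ_[p][X]) * X})ˣ n) e1
    (aux_map_nthPowers (G := ℤ_[p]ˣ) (H := (ℤ_[p][X] ⧸ Ideal.span {(p : ℤ_[p][X]) * X})ˣ) e1 n)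
  obtain ⟨e3⟩ := aux_equiv2 (p := p) n hn hpn
  exact ⟨e2.symm.trans e3⟩
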